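/- Fix integers $n \geq 5$, $m \geq 1$, $p \in \{1, \dots, nm\}$, and write $p - 1 = kn + d$ with $0 \leq d \leq n-1$. If $p \geq n(m-1) + 2$ (equivalently $k = m-1$), then the minimum of the functional $\mathcal{F}(\underline{r}, \Gamma)$ of the paper over $\underline{r} \in \Delta_m$ and cardinality-$(p-1)$ subsets $\Gamma \subset \{1,\dots,m\} \times \{1,\dots,n\}$ with at most $m-1$ elements in the first column equals $d + 2$. -/
import Mathlib


open Finset

/-- The functional `𝓕(r, Γ)` of the paper (Definition of Section "Computation of the curvature
constants for `(𝔹^n)^m`"), for `r` in the ordered simplex `Δ_m` and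
`Γ ⊆ ⟦1,m⟧ × ⟦1,n⟧` with `k'` elements in the first column (rows are indexed by `Fin m` with
first row `0`, columns by `Fin n` with first column `0`):
`𝓕(r, Γ) = 2 + ∑_{(i,j) ∈ Γ, j ≥ 2} r_i` if `k' = m - 1`, and
`𝓕(r, Γ) = 2 ∑ r_i² + 2 ∑_{(i,1) ∈ Γ} r_i + ∑_{(i,j) ∈ Γ, j ≥ 2} r_i` if `k' ≤ m - 2`. -/
noncomputable def Ffun (m n : ℕ) (r : Fin m → ℝ) (Γ : Finset (Fin m × Fin n)) : ℝ :=
  if (Γ.filter fun q => q.2.val = 0).card = m - 1 then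
    2 + ∑ q ∈ Γ.filter (fun q => q.2.val ≠ 0), r q.1
  else
    2 * ∑ i, r i ^ 2 + 2 * ∑ q ∈ Γ.filter (fun q => q.2.val = 0), r q.1 +
      ∑ q ∈ Γ.filter (fun q => q.2.val ≠ 0), r q.1

section Aux

variable {m n : ℕ}

lemma auxJ1card (hn : 1 ≤ n) : (univ.filter fun j : Fin n => j.val ≠ 0).card = n - 1 := by
  have h : ∀ x ∈ Finset.Ico 1 n, x < n := by intro x hx; simp [Finset.mem_Ico] at hx; omega
  have e : (univ.filter fun j : Fin n => j.val ≠ 0) = (Finset.Ico 1 n).attachFin h := by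
    ext j; simp [Finset.mem_Ico]; omega
  rw [e, Finset.card_attachFin]; simp

lemma auxJ0card (hn : 1 ≤ n) : (univ.filter fun j : Fin n => j.val = 0).card = 1 := by
  have h : ∀ x ∈ ({0} : Finset ℕ), x < n := by intro x hx; simp at hx; omega
  have e : (univ.filter fun j : Fin n => j.val = 0) = ({0} : Finset ℕ).attachFin h := by
    ext j; simp
  rw [e, Finset.card_attachFin]; simp

lemma auxJdcard {d : ℕ} (hd : d + 1 ≤ n) :
    (univ.filter fun j : Fin n => j.val ≠ 0 ∧ j.val ≤ d).card = d := by
  have h : ∀ x ∈ Finset.Ico 1 (d+1), x < n := by intro x hx; simp [Finset.mem_Ico] at hx; omega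
  have e : (univ.filter fun j : Fin n => j.val ≠ 0 ∧ j.val ≤ d)
      = (Finset.Ico 1 (d+1)).attachFin h := by
    ext j; simp [Finset.mem_Ico]; omega
  rw [e, Finset.card_attachFin]; simp

lemma auxFilterSnd (P : Fin n → Prop) [DecidablePred P] (Γ : Finset (Fin m × Fin n)) :
    Γ.filter (fun q => P q.2) ⊆ univ ×ˢ (univ.filter P) := by
  intro q hq; simp only [Finset.mem_filter] at hq
  simp [hq.2]

lemma auxSumSnd (P : Fin n → Prop) [DecidablePred P] (r : Fin m → ℝ) :
    ∑ q ∈ univ ×ˢ (univ.filter P), r q.1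
      = ((univ.filter P).card : ℝ) * ∑ i, r i := by
  rw [Finset.sum_product]
  simp only [Finset.sum_const, nsmul_eq_mul, ← Finset.mul_sum]

end Aux

/-- Fix `n ≥ 5`, `m ≥ 1`, `p ∈ {1, …, nm}`, and write `p - 1 = kn + d` with
`0 ≤ d ≤ n - 1`.  If `k = m - 1` (the regime `p ≥ n(m-1) + 2` of the first column of the
table), then the minimum of `𝓕(r, Γ)` over `r ∈ Δ_m` and cardinality-`(p-1)` subsets
`Γ ⊆ ⟦1,m⟧ × ⟦1,n⟧` with at most `m - 1` elements in the first column equals `d + 2`. -/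
theorem stmt19 (n m p k d : ℕ) (hn : 5 ≤ n) (hm : 1 ≤ m)
    (hp1 : 1 ≤ p) (hpnm : p ≤ n * m) (hpd : p - 1 = k * n + d) (hdn : d ≤ n - 1)
    (hk : k = m - 1) :
    IsLeast {v : ℝ | ∃ (r : Fin m → ℝ) (Γ : Finset (Fin m × Fin n)),
        (∀ i, 0 ≤ r i) ∧ (∑ i, r i = 1) ∧ Antitone r ∧
        Γ.card = p - 1 ∧ (Γ.filter fun q => q.2.val = 0).card ≤ m - 1 ∧
        v = Ffun m n r Γ} ((d : ℝ) + 2) := by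

  haveI : NeZero m := ⟨by omega⟩
  have hdn' : d + 1 ≤ n := by omega
  have hpmain : p - 1 = (m - 1) * n + d := by rw [← hk]; exact hpd
  have e1 : m * (n - 1) + m = m * n := by
    have h1 : n - 1 + 1 = n := by omega
    calc m * (n - 1) + m = m * ((n - 1) + 1) := by ring
    _ = m * n := by rw [h1]
  have e2 : (m - 1) * n + n = m * n := by
    have h1 : m - 1 + 1 = m := by omega
    calc (m - 1) * n + n = ((m - 1) + 1) * n := by ring
    _ = m * n := by rw [h1]
  set J0 : Finset (Fin n) := univ.filter (fun j => j.val = 0) with hJ0def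
  set J1 : Finset (Fin n) := univ.filter (fun j => j.val ≠ 0) with hJ1def
  have hJ0 : J0.card = 1 := auxJ0card (by omega)
  have hJ1 : J1.card = n - 1 := auxJ1card (by omega)
  constructor
  · -- membership
    set Jd : Finset (Fin n) := univ.filter (fun j => j.val ≠ 0 ∧ j.val ≤ d) with hJddef
    have hJd : Jd.card = d := auxJdcard hdn'
    set r : Fin m → ℝ := fun i => if i = 0 then 1 else 0 with hrdef
    set Γ : Finset (Fin m × Fin n) :=
      ((univ.filter (· ≠ (0 : Fin m))) ×ˢ univ) ∪ (({(0 : Fin m)} : Finset (Fin m)) ×ˢ Jd)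
      with hΓdef
    have hdisj : Disjoint ((univ.filter (· ≠ (0 : Fin m))) ×ˢ (univ : Finset (Fin n)))
        (({(0 : Fin m)} : Finset (Fin m)) ×ˢ Jd) := by
      rw [Finset.disjoint_left]
      rintro ⟨i, j⟩ h1 h2
      simp only [Finset.mem_product, Finset.mem_filter, Finset.mem_singleton] at h1 h2
      exact h1.1.2 h2.1
    have hΓcard : Γ.card = p - 1 := by
      rw [hΓdef, Finset.card_union_of_disjoint hdisj, Finset.card_product,
        Finset.card_product, Finset.filter_ne', Finset.card_erase_of_mem (Finset.mem_univ _),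
        Finset.card_univ, Finset.card_univ, Finset.card_singleton, hJd, Fintype.card_fin,
        Fintype.card_fin, hpmain, one_mul]
    have hΓ0 : Γ.filter (fun q => q.2.val = 0) = (univ.filter (· ≠ (0 : Fin m))) ×ˢ J0 := by
      ext ⟨i, j⟩
      simp only [hΓdef, hJddef, hJ0def, Finset.mem_filter, Finset.mem_union,
        Finset.mem_product, Finset.mem_filter, Finset.mem_univ, true_and,
        Finset.mem_singleton]
      tauto
    have hΓ0card : (Γ.filter (fun q => q.2.val = 0)).card = m - 1 := by
      rw [hΓ0, Finset.card_product, hJ0, Finset.filter_ne',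
        Finset.card_erase_of_mem (Finset.mem_univ _), Finset.card_univ, Fintype.card_fin,
        mul_one]
    refine ⟨r, Γ, ?_, ?_, ?_, hΓcard, le_of_eq hΓ0card, ?_⟩
    · intro i; rw [hrdef]; dsimp only; split_ifs <;> norm_num
    · rw [hrdef]; simp
    · intro a b hab
      rw [hrdef]; dsimp only
      split_ifs with h1 h2 h2
      · norm_num
      · exfalso; apply h2; subst h1
        exact le_antisymm hab (Fin.zero_le a)
      · norm_num
      · norm_num
    · unfold Ffun
      rw [if_pos hΓ0card]
      have hΓ1 : Γ.filter (fun q => q.2.val ≠ 0)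
          = ((univ.filter (· ≠ (0 : Fin m))) ×ˢ J1) ∪ (({(0 : Fin m)} : Finset (Fin m)) ×ˢ Jd) := by
        ext ⟨i, j⟩
        simp only [hΓdef, hJddef, hJ1def, Finset.mem_filter, Finset.mem_union,
          Finset.mem_product, Finset.mem_filter, Finset.mem_univ, true_and,
          Finset.mem_singleton]
        tauto
      have hdisj1 : Disjoint ((univ.filter (· ≠ (0 : Fin m))) ×ˢ J1)
          (({(0 : Fin m)} : Finset (Fin m)) ×ˢ Jd) := by
        rw [Finset.disjoint_left]
        rintro ⟨i, j⟩ h1 h2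
        simp only [Finset.mem_product, Finset.mem_filter, Finset.mem_singleton] at h1 h2
        exact h1.1.2 h2.1
      rw [hΓ1, Finset.sum_union hdisj1, Finset.sum_product, Finset.sum_product]
      have hz : ∑ i ∈ univ.filter (· ≠ (0 : Fin m)), ∑ _j ∈ J1, r i = 0 := by
        apply Finset.sum_eq_zero
        intro i hi
        simp only [Finset.mem_filter] at hi
        rw [hrdef]; simp [hi.2]
      rw [hz, zero_add, Finset.sum_singleton]
      rw [hrdef]; simp [hJd]
      ring
  · -- lower bound
    rintro v ⟨r, Γ, hr0, hrsum, _hanti, hcard, hk', rfl⟩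
    have hr1 : ∀ i, r i ≤ 1 := by
      intro i
      rw [← hrsum]
      exact Finset.single_le_sum (fun j _ => hr0 j) (Finset.mem_univ i)
    unfold Ffun
    set Γ0 := Γ.filter (fun q => q.2.val = 0) with hΓ0def
    set Γ1 := Γ.filter (fun q => q.2.val ≠ 0) with hΓ1def
    have hsplit : Γ0.card + Γ1.card = p - 1 := by
      rw [hΓ0def, hΓ1def, Finset.card_filter_add_card_filter_not, hcard]
    have hsub1 : Γ1 ⊆ univ ×ˢ J1 := by
      rw [hΓ1def, hJ1def]
      intro q hq
      simp only [Finset.mem_filter] at hq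
      simp [hq.2]
    have hsub0 : Γ0 ⊆ univ ×ˢ J0 := by
      rw [hΓ0def, hJ0def]
      intro q hq
      simp only [Finset.mem_filter] at hq
      simp [hq.2]
    set V := (univ ×ˢ J1) \ Γ1 with hVdef
    set W := (univ ×ˢ J0) \ Γ0 with hWdef
    have hVcard : V.card + Γ1.card = m * (n - 1) := by
      rw [hVdef, Finset.card_sdiff_add_card_eq_card hsub1, Finset.card_product,
        Finset.card_univ, Fintype.card_fin, hJ1]
    have hWcard : W.card + Γ0.card = m := by
      rw [hWdef, Finset.card_sdiff_add_card_eq_card hsub0, Finset.card_product,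
        Finset.card_univ, Fintype.card_fin, hJ0, mul_one]
    have hsumV : ∑ q ∈ V, r q.1 + ∑ q ∈ Γ1, r q.1 = (n : ℝ) - 1 := by
      rw [hVdef, Finset.sum_sdiff hsub1, auxSumSnd, hJ1, hrsum, mul_one]
      push_cast [Nat.cast_sub (by omega : 1 ≤ n)]
      ring
    have hsumW : ∑ q ∈ W, r q.1 + ∑ q ∈ Γ0, r q.1 = 1 := by
      rw [hWdef, Finset.sum_sdiff hsub0, auxSumSnd, hJ0, hrsum]
      norm_num
    have hVle : ∑ q ∈ V, r q.1 ≤ (V.card : ℝ) := by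
      calc ∑ q ∈ V, r q.1 ≤ ∑ _q ∈ V, (1 : ℝ) := Finset.sum_le_sum (fun q _ => hr1 q.1)
      _ = V.card := by simp
    split_ifs with hbr
    · -- first branch : k' = m - 1
      have hVc : V.card + d + 1 = n := by omega
      have hVcR : (V.card : ℝ) = (n : ℝ) - 1 - (d : ℝ) := by
        have h := hVc
        have : ((V.card : ℝ) + d + 1 : ℝ) = n := by exact_mod_cast congrArg (Nat.cast (R := ℝ)) h
        linarith
      linarith [hsumV, hVle]
    · -- second branch : k' ≤ m - 2
      have hq2 : 2 ≤ W.card := by omega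
      have hEq : V.card + W.card + d = n := by omega
      have hEqR : (V.card : ℝ) + (W.card : ℝ) + (d : ℝ) = n := by exact_mod_cast congrArg (Nat.cast (R := ℝ)) hEq
      have hq2R : (2 : ℝ) ≤ (W.card : ℝ) := by exact_mod_cast hq2
      have hWsnd : ∀ q ∈ W, q.2.val = 0 := by
        intro q hq
        have hmem := (Finset.mem_sdiff.mp hq).1
        simp only [Finset.mem_product, hJ0def, Finset.mem_filter] at hmem
        exact hmem.2.2
      have hsq : ∑ q ∈ W, (r q.1)^2 ≤ ∑ i, r i ^ 2 := by
        have hinj : Set.InjOn Prod.fst (W : Set (Fin m × Fin n)) := by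
          intro a ha b hb hab
          have h1 := hWsnd a (Finset.mem_coe.mp ha)
          have h2 := hWsnd b (Finset.mem_coe.mp hb)
          exact Prod.ext hab (Fin.ext (by rw [h1, h2]))
        have himg := Finset.sum_image (f := fun i => r i ^ 2) (s := W) (g := Prod.fst)
          (fun a ha b hb hab => hinj ha hb hab)
        calc ∑ q ∈ W, (r q.1)^2 = ∑ i ∈ W.image Prod.fst, r i ^ 2 := himg.symm
        _ ≤ ∑ i, r i ^ 2 := Finset.sum_le_sum_of_subset_of_nonneg (Finset.subset_univ _)
          (fun i _ _ => sq_nonneg _)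
      have hWb : 2 * ∑ q ∈ W, r q.1 ≤ 2 * ∑ q ∈ W, (r q.1)^2 + (W.card : ℝ) / 2 := by
        have hterm : ∀ q ∈ W, 2 * r q.1 ≤ 2 * (r q.1)^2 + 1/2 := by
          intro q _
          nlinarith [sq_nonneg (r q.1 - 1/2)]
        calc 2 * ∑ q ∈ W, r q.1 = ∑ q ∈ W, 2 * r q.1 := by rw [Finset.mul_sum]
        _ ≤ ∑ q ∈ W, (2 * (r q.1)^2 + 1/2) := Finset.sum_le_sum hterm
        _ = 2 * ∑ q ∈ W, (r q.1)^2 + (W.card : ℝ) / 2 := by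
            rw [Finset.sum_add_distrib, ← Finset.mul_sum, Finset.sum_const, nsmul_eq_mul]
            ring
      linarith [hsumV, hsumW, hVle, hWb, hsq]
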